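/- arXiv:2102.02341 — 3 statements merged into one kernel-verified Lean document; each statement's English description precedes it below -/
import Mathlib

section
/- Suppose functions ỹ_a : (0,∞) → ℝ for a = 0,…,A are differentiable, satisfy ỹ_0(x) = x, and satisfy the recurrence x · ỹ_a'(x) − ỹ_a(x) = a · ỹ_{a−1}(x) for all a = 1,…,A and x > 0. Then there exist constants C_1,…,C_A such that ỹ_a(x) = y_a(x) + Σ_{b=0}^{a−1} C_{a−b} (a!/b!) y_b(x) for all a and all x > 0, where y_b(x) = x (log x)^b. -/
/-!
Every solution of `x f' = f` on `(0, ∞)` is `f 1 * x`, because `f x / x` has derivative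
`(x f' x - f x) / x ^ 2 = 0`. Since `x y_b' - y_b = b y_{b-1}`, the combinations
`y_a + ∑_{b<a} C_{a-b} (a!/b!) y_b` satisfy the recurrence for every choice of constants; with
`C_a = ỹ_a(1) / a!` they also agree with `ỹ_a` at `x = 1`. By induction on `a`, the difference
solves the homogeneous equation and vanishes at `1`, hence vanishes identically.
-/

open Real

noncomputable def kinY (a : ℕ) (x : ℝ) : ℝ := x * (Real.log x) ^ a

theorem eq_mul_of_mul_deriv_eq {f : ℝ → ℝ}
    (hf : ∀ x, 0 < x → DifferentiableAt ℝ f x) (hode : ∀ x, 0 < x → x * deriv f x = f x)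
    {x : ℝ} (hx : 0 < x) : f x = f 1 * x := by
  have hquot : ∀ y, 0 < y → HasDerivAt (fun y => f y / y) 0 y := by
    intro y hy
    have hdiv := (hf y hy).hasDerivAt.div (hasDerivAt_id y) hy.ne'
    rwa [id_eq, mul_one, mul_comm, hode y hy, sub_self, zero_div] at hdiv
  have hconst : f x / x = f 1 / 1 :=
    isOpen_Ioi.is_const_of_deriv_eq_zero isPreconnected_Ioi
      (fun y hy => (hquot y hy).differentiableAt.differentiableWithinAt)
      (fun y hy => (hquot y hy).deriv) hx (Set.mem_Ioi.mpr one_pos)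
  rwa [div_one, div_eq_iff hx.ne'] at hconst

theorem differentiableAt_kinY (b : ℕ) {x : ℝ} (hx : 0 < x) : DifferentiableAt ℝ (kinY b) x :=
  differentiableAt_id.mul ((differentiableAt_log hx.ne').pow b)

theorem mul_deriv_kinY_sub (b : ℕ) {x : ℝ} (hx : 0 < x) :
    x * deriv (kinY b) x - kinY b x = b * kinY (b - 1) x := by
  have hderiv : HasDerivAt (kinY b) (1 * log x ^ b + x * (b * log x ^ (b - 1) * x⁻¹)) x :=
    (hasDerivAt_id x).mul ((hasDerivAt_log hx.ne').pow b)
  rw [hderiv.deriv, kinY, kinY]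
  field_simp
  ring

noncomputable def kinYComb (C : ℕ → ℝ) (a : ℕ) (x : ℝ) : ℝ :=
  kinY a x + ∑ b ∈ Finset.range a, C (a - b) * ((a.factorial : ℝ) / (b.factorial : ℝ)) * kinY b x

theorem kinYComb_zero (C : ℕ → ℝ) (x : ℝ) : kinYComb C 0 x = x := by
  simp [kinYComb, kinY]

theorem kinYComb_one (C : ℕ → ℝ) {a : ℕ} (ha : 0 < a) :
    kinYComb C a 1 = C a * a.factorial := by
  obtain ⟨a, rfl⟩ := Nat.exists_eq_add_of_lt ha
  simp [kinYComb, kinY, Finset.sum_range_succ', zero_pow (Nat.succ_ne_zero _)]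

theorem differentiableAt_kinYComb (C : ℕ → ℝ) (a : ℕ) {x : ℝ} (hx : 0 < x) :
    DifferentiableAt ℝ (kinYComb C a) x :=
  (differentiableAt_kinY a hx).add
    (DifferentiableAt.fun_sum fun b _ => (differentiableAt_kinY b hx).const_mul _)

theorem factorial_div_mul_succ (a b : ℕ) :
    ((a + 1).factorial : ℝ) / ((b + 1).factorial : ℝ) * (b + 1) =
      (a + 1) * ((a.factorial : ℝ) / (b.factorial : ℝ)) := by
  rw [Nat.factorial_succ a, Nat.factorial_succ b]
  push_cast
  field_simp

theorem mul_deriv_kinYComb_succ_sub (C : ℕ → ℝ) (a : ℕ) {x : ℝ} (hx : 0 < x) :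
    x * deriv (kinYComb C (a + 1)) x - kinYComb C (a + 1) x = (a + 1) * kinYComb C a x := by
  set c : ℕ → ℕ → ℝ := fun a b => C (a - b) * ((a.factorial : ℝ) / (b.factorial : ℝ))
  have hderiv : deriv (kinYComb C (a + 1)) x =
      deriv (kinY (a + 1)) x + ∑ b ∈ Finset.range (a + 1), c (a + 1) b * deriv (kinY b) x := by
    rw [show kinYComb C (a + 1) = fun y => kinY (a + 1) y +
        ∑ b ∈ Finset.range (a + 1), c (a + 1) b * kinY b y from rfl,
      deriv_fun_add (differentiableAt_kinY _ hx)
        (DifferentiableAt.fun_sum fun b _ => (differentiableAt_kinY b hx).const_mul _),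
      deriv_fun_sum fun b _ => (differentiableAt_kinY b hx).const_mul _]
    simp only [deriv_const_mul _ (differentiableAt_kinY _ hx)]
  have hsum : x * ∑ b ∈ Finset.range (a + 1), c (a + 1) b * deriv (kinY b) x -
      ∑ b ∈ Finset.range (a + 1), c (a + 1) b * kinY b x =
      (a + 1) * ∑ b ∈ Finset.range a, c a b * kinY b x := by
    rw [Finset.mul_sum, ← Finset.sum_sub_distrib, Finset.mul_sum]
    simp_rw [show ∀ b, x * (c (a + 1) b * deriv (kinY b) x) - c (a + 1) b * kinY b x =
        c (a + 1) b * (x * deriv (kinY b) x - kinY b x) from fun b => by ring,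
      mul_deriv_kinY_sub _ hx]
    rw [Finset.sum_range_succ']
    refine (add_eq_left.mpr (by simp)).trans (Finset.sum_congr rfl fun b _ => ?_)
    simp only [c, Nat.add_sub_add_right, Nat.add_sub_cancel]
    push_cast
    linear_combination C (a - b) * kinY b x * factorial_div_mul_succ a b
  have hlead := mul_deriv_kinY_sub (a + 1) hx
  rw [Nat.add_sub_cancel] at hlead
  rw [hderiv]
  simp only [kinYComb, c] at hsum ⊢
  push_cast at hsum hlead ⊢
  linear_combination hlead + hsum

theorem stmt_2 (A : ℕ) (ytil : ℕ → ℝ → ℝ)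
    (hdiff : ∀ a ≤ A, ∀ x : ℝ, 0 < x → DifferentiableAt ℝ (ytil a) x)
    (h0 : ∀ x : ℝ, 0 < x → ytil 0 x = x)
    (hrec : ∀ a, 1 ≤ a → a ≤ A → ∀ x : ℝ, 0 < x →
      x * deriv (ytil a) x - ytil a x = a * ytil (a - 1) x) :
    ∃ C : ℕ → ℝ, ∀ a ≤ A, ∀ x : ℝ, 0 < x →
      ytil a x = kinY a x +
        ∑ b ∈ Finset.range a, C (a - b) * ((a.factorial : ℝ) / (b.factorial : ℝ)) * kinY b x := by
  set C : ℕ → ℝ := fun a => ytil a 1 / a.factorial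
  refine ⟨C, fun a ha x hx => ?_⟩
  change ytil a x = kinYComb C a x
  induction a generalizing x with
  | zero => rw [h0 x hx, kinYComb_zero]
  | succ a ih =>
    set f : ℝ → ℝ := fun y => ytil (a + 1) y - kinYComb C (a + 1) y
    have hfdiff : ∀ y, 0 < y → DifferentiableAt ℝ f y := fun y hy =>
      (hdiff _ ha y hy).sub (differentiableAt_kinYComb C _ hy)
    have hode : ∀ y, 0 < y → y * deriv f y = f y := by
      intro y hy
      have hyrec := hrec (a + 1) a.succ_pos ha y hy
      rw [Nat.add_sub_cancel, ih (by omega) y hy] at hyrec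
      rw [deriv_fun_sub (hdiff _ ha y hy) (differentiableAt_kinYComb C _ hy)]
      push_cast at hyrec
      linear_combination hyrec - mul_deriv_kinYComb_succ_sub C a hy
    have hf1 : f 1 = 0 := by
      simp only [f, kinYComb_one C a.succ_pos, C]
      field_simp [Nat.cast_ne_zero.mpr (Nat.factorial_ne_zero _)]
      ring
    linear_combination eq_mul_of_mul_deriv_eq hfdiff hode hx + x * hf1
end

section
/- Under the assumptions of the previous statement, the kinetic-theory temperature θ[f] and the thermodynamic temperature T(ρ, s) = ρ^{2/n}(2πe)^{−1} exp(−(2/n) s/ρ) (with s = ∫ f log f dp) satisfy θ[f] = T(ρ, s) · exp( (2/n) r[f|f_m]/ρ ). In particular θ[f] ≥ T(ρ, s), with equality if and only if f = f_m almost everywhere. -/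
/-!
Gibbs' inequality `x log (x / y) + y - x = y · klFun (x / y) ≥ 0`, with equality only at `x = y`,
gives `r ≥ 0` with equality iff `f = fm` a.e. Since `log fm` is an affine function of `‖p - u‖²`
and `fm` has the same mass `ρ` as `f`, the cross term `∫ f log fm` is determined by `ρ` and the
second moment `n ρ θ`, so `r = s - ρ log ρ + (n ρ / 2) (log (2πθ) + 1)`. Solving for `log θ`
gives `θ = T · exp ((2 / n) r / ρ)`.
-/

open Real MeasureTheory InformationTheory

section RelativeEntropy

variable {α : Type*} [MeasurableSpace α] {μ : Measure α} {f g : α → ℝ}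

lemma mul_log_div_add_sub_eq_mul_klFun (x : ℝ) {y : ℝ} (hy : y ≠ 0) :
    x * log (x / y) + y - x = y * klFun (x / y) := by
  rw [klFun_apply]
  field_simp

lemma mul_log_div_add_sub_nonneg {x y : ℝ} (hx : 0 ≤ x) (hy : 0 < y) :
    0 ≤ x * log (x / y) + y - x := by
  rw [mul_log_div_add_sub_eq_mul_klFun x hy.ne']
  exact mul_nonneg hy.le (klFun_nonneg (div_nonneg hx hy.le))

lemma mul_log_div_add_sub_eq_zero_iff {x y : ℝ} (hx : 0 ≤ x) (hy : 0 < y) :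
    x * log (x / y) + y - x = 0 ↔ x = y := by
  rw [mul_log_div_add_sub_eq_mul_klFun x hy.ne', mul_eq_zero,
    klFun_eq_zero_iff (div_nonneg hx hy.le), div_eq_one_iff_eq hy.ne']
  simp [hy.ne']

lemma mul_log_div_eq_sub {x y : ℝ} (hy : y ≠ 0) : x * log (x / y) = x * log x - x * log y := by
  rcases eq_or_ne x 0 with rfl | hx
  · simp
  · rw [log_div hx hy]
    ring

lemma integral_relEntropy_nonneg (hf : ∀ a, 0 ≤ f a) (hg : ∀ a, 0 < g a) :
    0 ≤ ∫ a, (f a * log (f a / g a) + g a - f a) ∂μ :=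
  integral_nonneg fun a => mul_log_div_add_sub_nonneg (hf a) (hg a)

lemma integral_relEntropy_eq_zero_iff (hf : ∀ a, 0 ≤ f a) (hg : ∀ a, 0 < g a)
    (hint : Integrable (fun a => f a * log (f a / g a) + g a - f a) μ) :
    ∫ a, (f a * log (f a / g a) + g a - f a) ∂μ = 0 ↔ f =ᵐ[μ] g := by
  rw [integral_eq_zero_iff_of_nonneg (fun a => mul_log_div_add_sub_nonneg (hf a) (hg a)) hint]
  exact Filter.eventually_congr (.of_forall fun a => mul_log_div_add_sub_eq_zero_iff (hf a) (hg a))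

variable (hg0 : ∀ a, g a ≠ 0) (hf : Integrable f μ) (hg' : Integrable g μ)
  (hfent : Integrable (fun a => f a * log (f a)) μ)
  (hcross : Integrable (fun a => f a * log (g a)) μ)
include hg0 hf hg' hfent hcross

lemma integrable_relEntropy_integrand :
    Integrable (fun a => f a * log (f a / g a) + g a - f a) μ := by
  simp only [mul_log_div_eq_sub (hg0 _)]
  exact ((hfent.sub hcross).add hg').sub hf

lemma integral_relEntropy_eq :
    ∫ a, (f a * log (f a / g a) + g a - f a) ∂μ =
      ∫ a, f a * log (f a) ∂μ - ∫ a, f a * log (g a) ∂μ + ∫ a, g a ∂μ - ∫ a, f a ∂μ := by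
  have hdiff : Integrable (fun a => f a * log (f a) - f a * log (g a)) μ := hfent.sub hcross
  have hsum : Integrable (fun a => f a * log (f a) - f a * log (g a) + g a) μ := hdiff.add hg'
  simp only [mul_log_div_eq_sub (hg0 _)]
  rw [integral_sub hsum hf, integral_add hdiff hg', integral_sub hfent hcross]

end RelativeEntropy

lemma integrable_sq_norm_sub_mul {E : Type*} [NormedAddCommGroup E] [MeasurableSpace E]
    [OpensMeasurableSpace E] {μ : Measure E} {f : E → ℝ} (hf : Integrable f μ)
    (hf2 : Integrable (fun p => ‖p‖ ^ 2 * f p) μ) (u : E) :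
    Integrable (fun p => ‖p - u‖ ^ 2 * f p) μ := by
  refine ((hf2.const_mul 2).add (hf.const_mul (2 * ‖u‖ ^ 2))).mono
    ((continuous_id.sub continuous_const).norm.pow 2 |>.aestronglyMeasurable.mul
      hf.aestronglyMeasurable) (.of_forall fun p => ?_)
  have hsq : ‖p - u‖ ^ 2 ≤ 2 * ‖p‖ ^ 2 + 2 * ‖u‖ ^ 2 := by
    nlinarith [norm_sub_le p u, sq_nonneg (‖p‖ - ‖u‖), norm_nonneg (p - u)]
  simp only [Pi.add_apply, norm_mul, norm_pow, norm_norm, ← add_mul, ← mul_assoc]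
  rw [Real.norm_of_nonneg (by positivity : 0 ≤ 2 * ‖p‖ ^ 2 + 2 * ‖u‖ ^ 2)]
  exact mul_le_mul_of_nonneg_right hsq (norm_nonneg _)

section Maxwellian

variable {V : Type*} [NormedAddCommGroup V] [InnerProductSpace ℝ V]

variable (V) in
noncomputable def maxwellian (ρ θ : ℝ) (u p : V) : ℝ :=
  ρ * (2 * π * θ) ^ (-(Module.finrank ℝ V : ℝ) / 2) * exp (-‖p - u‖ ^ 2 / (2 * θ))

variable {ρ θ : ℝ} {u : V}

lemma maxwellian_pos (hρ : 0 < ρ) (hθ : 0 < θ) (p : V) : 0 < maxwellian V ρ θ u p := by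
  unfold maxwellian
  positivity

lemma log_maxwellian (hρ : 0 < ρ) (hθ : 0 < θ) (p : V) :
    log (maxwellian V ρ θ u p) =
      log ρ - Module.finrank ℝ V / 2 * log (2 * π * θ) - ‖p - u‖ ^ 2 / (2 * θ) := by
  unfold maxwellian
  rw [log_mul (by positivity) (exp_pos _).ne', log_exp, log_mul hρ.ne' (by positivity),
    log_rpow (by positivity)]
  ring

lemma mul_log_maxwellian_eq (hρ : 0 < ρ) (hθ : 0 < θ) (f : V → ℝ) :
    (fun p => f p * log (maxwellian V ρ θ u p)) = fun p =>
      (log ρ - Module.finrank ℝ V / 2 * log (2 * π * θ)) * f p -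
        (2 * θ)⁻¹ * (‖p - u‖ ^ 2 * f p) := by
  ext p
  rw [log_maxwellian hρ hθ]
  ring

variable [FiniteDimensional ℝ V] [MeasurableSpace V] [BorelSpace V]

lemma integral_exp_neg_sq_norm_sub_div (hθ : 0 < θ) :
    ∫ p, exp (-‖p - u‖ ^ 2 / (2 * θ)) = (2 * π * θ) ^ ((Module.finrank ℝ V : ℝ) / 2) := by
  calc ∫ p, exp (-‖p - u‖ ^ 2 / (2 * θ))
      = ∫ p : V, exp (-(1 / (2 * θ)) * ‖p‖ ^ 2) := by
        rw [integral_sub_right_eq_self (fun p : V => exp (-‖p‖ ^ 2 / (2 * θ))) u]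
        congr with p
        ring_nf
    _ = (2 * π * θ) ^ ((Module.finrank ℝ V : ℝ) / 2) := by
        rw [GaussianFourier.integral_rexp_neg_mul_sq_norm (by positivity)]
        congr 1
        field_simp

lemma integrable_exp_neg_sq_norm_sub_div (hθ : 0 < θ) :
    Integrable fun p : V => exp (-‖p - u‖ ^ 2 / (2 * θ)) :=
  .of_integral_ne_zero <| by rw [integral_exp_neg_sq_norm_sub_div hθ]; positivity

lemma integrable_maxwellian (hθ : 0 < θ) : Integrable (maxwellian V ρ θ u) :=
  (integrable_exp_neg_sq_norm_sub_div hθ).const_mul _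

lemma integral_maxwellian (hθ : 0 < θ) : ∫ p, maxwellian V ρ θ u p = ρ := by
  simp only [maxwellian]
  rw [integral_const_mul, integral_exp_neg_sq_norm_sub_div hθ, mul_assoc,
    ← rpow_add (by positivity), neg_div, neg_add_cancel, rpow_zero, mul_one]

variable {f : V → ℝ} (hρ : 0 < ρ) (hθ : 0 < θ) (hf : Integrable f)
  (hf2 : Integrable fun p => ‖p - u‖ ^ 2 * f p)
include hρ hθ hf hf2

lemma integrable_mul_log_maxwellian :
    Integrable fun p => f p * log (maxwellian V ρ θ u p) := by
  rw [mul_log_maxwellian_eq hρ hθ]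
  exact (hf.const_mul _).sub (hf2.const_mul _)

lemma integral_mul_log_maxwellian :
    ∫ p, f p * log (maxwellian V ρ θ u p) =
      (log ρ - Module.finrank ℝ V / 2 * log (2 * π * θ)) * (∫ p, f p) -
        (∫ p, ‖p - u‖ ^ 2 * f p) / (2 * θ) := by
  rw [mul_log_maxwellian_eq hρ hθ, integral_sub (hf.const_mul _) (hf2.const_mul _),
    integral_const_mul, integral_const_mul, inv_mul_eq_div]

end Maxwellian

lemma eq_temperature_mul_exp {d ρ θ s r : ℝ} (hd : 0 < d) (hρ : 0 < ρ) (hθ : 0 < θ)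
    (hr : r = s - ρ * (log ρ - d / 2 * (log (2 * π * θ) + 1))) :
    θ = ρ ^ (2 / d) * (2 * π * exp 1)⁻¹ * exp (-(2 / d) * (s / ρ)) * exp (2 / d * (r / ρ)) := by
  have hlog : 2 / d * log ρ + -log (2 * π * exp 1) + -(2 / d) * (s / ρ) + 2 / d * (r / ρ) =
      log θ := by
    rw [hr, log_mul (by positivity) (exp_pos 1).ne', log_exp, log_mul (by positivity) hθ.ne']
    field_simp
    ring
  rw [rpow_def_of_pos hρ, ← exp_log (by positivity : 0 < 2 * π * exp 1), ← exp_neg,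
    ← exp_add, ← exp_add, ← exp_add, mul_comm (log ρ), hlog, exp_log hθ]

theorem stmt_14_general (n : ℕ) (hn : 1 ≤ n)
    (f : EuclideanSpace ℝ (Fin n) → ℝ) (hfpos : ∀ p, 0 < f p)
    (hf : Integrable f) (hf2 : Integrable (fun p => ‖p‖ ^ 2 * f p))
    (hfent : Integrable (fun p => f p * Real.log (f p)))
    (ρ θ : ℝ) (u : EuclideanSpace ℝ (Fin n))
    (hρ : ρ = ∫ p, f p) (hρpos : 0 < ρ)
    (hθ : θ = (1 / (n * ρ)) * ∫ p, ‖p - u‖ ^ 2 * f p) (hθpos : 0 < θ)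
    (fm : EuclideanSpace ℝ (Fin n) → ℝ)
    (hfm : fm = fun p => ρ * (2 * π * θ) ^ (-(n : ℝ) / 2) *
      Real.exp (-‖p - u‖ ^ 2 / (2 * θ)))
    (s r T : ℝ)
    (hs : s = ∫ p, f p * Real.log (f p))
    (hr : r = ∫ p, (f p * Real.log (f p / fm p) + fm p - f p))
    (hT : T = ρ ^ ((2 : ℝ) / n) * (2 * π * Real.exp 1)⁻¹ * Real.exp (-(2 / n) * (s / ρ))) :
    θ = T * Real.exp ((2 / n) * (r / ρ)) ∧
    T ≤ θ ∧
    (θ = T ↔ f =ᵐ[volume] fm) := by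
  have hd : Module.finrank ℝ (EuclideanSpace ℝ (Fin n)) = n := finrank_euclideanSpace_fin
  have hnpos : (0 : ℝ) < n := by exact_mod_cast hn
  obtain rfl : fm = maxwellian _ ρ θ u := by
    ext p
    rw [hfm, maxwellian, hd]
  have hM := maxwellian_pos (u := u) hρpos hθpos
  have hmoment : ∫ p, ‖p - u‖ ^ 2 * f p = n * ρ * θ := by
    rw [hθ]
    field_simp
  have hf2u := integrable_sq_norm_sub_mul hf hf2 u
  have hcross := integrable_mul_log_maxwellian hρpos hθpos hf hf2u
  have hMint := integrable_maxwellian (ρ := ρ) (u := u) hθpos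
  have hr' : r = s - ρ * (log ρ - n / 2 * (log (2 * π * θ) + 1)) := by
    rw [hr, integral_relEntropy_eq (fun p => (hM p).ne') hf hMint hfent hcross,
      integral_maxwellian hθpos, integral_mul_log_maxwellian hρpos hθpos hf hf2u, ← hρ, ← hs,
      hmoment, hd]
    field_simp
    ring
  have hθT : θ = T * exp (2 / n * (r / ρ)) := hT ▸ eq_temperature_mul_exp hnpos hρpos hθpos hr'
  have hT0 : 0 < T := by rw [hT]; positivity
  have hr0 : 0 ≤ r := hr ▸ integral_relEntropy_nonneg (fun p => (hfpos p).le) hM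
  have hr_eq_zero : r = 0 ↔ f =ᵐ[volume] maxwellian _ ρ θ u := hr ▸
    integral_relEntropy_eq_zero_iff (fun p => (hfpos p).le) hM
      (integrable_relEntropy_integrand (fun p => (hM p).ne') hf hMint hfent hcross)
  refine ⟨hθT, hθT ▸ le_mul_of_one_le_right hT0.le (one_le_exp (by positivity)), ?_⟩
  rw [← hr_eq_zero, hθT, mul_eq_left₀ hT0.ne', exp_eq_one_iff, mul_eq_zero, div_eq_zero_iff]
  simp [hnpos.ne', hρpos.ne']

theorem stmt_14 (n : ℕ) (hn : 1 ≤ n)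
    (f : EuclideanSpace ℝ (Fin n) → ℝ) (hfpos : ∀ p, 0 < f p)
    (hf : Integrable f) (hf2 : Integrable (fun p => ‖p‖ ^ 2 * f p))
    (hfent : Integrable (fun p => f p * Real.log (f p)))
    (ρ θ : ℝ) (u : EuclideanSpace ℝ (Fin n))
    (hρ : ρ = ∫ p, f p) (hρpos : 0 < ρ)
    (hu : ρ • u = ∫ p, f p • p)
    (hθ : θ = (1 / (n * ρ)) * ∫ p, ‖p - u‖ ^ 2 * f p) (hθpos : 0 < θ)
    (fm : EuclideanSpace ℝ (Fin n) → ℝ)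
    (hfm : fm = fun p => ρ * (2 * π * θ) ^ (-(n : ℝ) / 2) *
      Real.exp (-‖p - u‖ ^ 2 / (2 * θ)))
    (s r T : ℝ)
    (hs : s = ∫ p, f p * Real.log (f p))
    (hr : r = ∫ p, (f p * Real.log (f p / fm p) + fm p - f p))
    (hT : T = ρ ^ ((2 : ℝ) / n) * (2 * π * Real.exp 1)⁻¹ * Real.exp (-(2 / n) * (s / ρ))) :
    θ = T * Real.exp ((2 / n) * (r / ρ)) ∧
    T ≤ θ ∧
    (θ = T ↔ f =ᵐ[volume] fm) :=
  stmt_14_general n hn f hfpos hf hf2 hfent ρ θ u hρ hρpos hθ hθpos fm hfm s r T hs hr hT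
end

section
/- Let B : ℝ → ℝ be a nonzero smooth bump function supported in [−1/2, 1/2], and for c ≥ 1 define f_c(p) = (B(p−c) + B(p+c))/2. Then for every continuous function y : ℝ → ℝ with y(0) = 0, the integral ∫_ℝ y(f_c(p)) dp is independent of c ≥ 1; moreover ∫_ℝ p f_c(p) dp = 0 for all c ≥ 1, while ∫_ℝ p² f_c(p) dp → ∞ as c → ∞. -/
open Real MeasureTheory Filter

private lemma integrable_aux17 {g : ℝ → ℝ} (hg : Continuous g) {a b : ℝ}
    (h : ∀ x, x ∉ Set.Icc a b → g x = 0) : Integrable g :=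
  hg.integrable_of_hasCompactSupport (HasCompactSupport.intro isCompact_Icc h)

theorem stmt_17 (B : ℝ → ℝ) (hB : ContDiff ℝ (⊤ : ℕ∞) B) (hBne : B ≠ 0)
    (hBsupp : Function.support B ⊆ Set.Icc (-(1/2) : ℝ) (1/2))
    (hBpos : ∀ p, 0 ≤ B p) (hBeven : ∀ p, B (-p) = B p)
    (f : ℝ → ℝ → ℝ) (hf : f = fun c p => (B (p - c) + B (p + c)) / 2) :
    (∀ y : ℝ → ℝ, Continuous y → y 0 = 0 →
      ∀ c₁ c₂ : ℝ, 1 ≤ c₁ → 1 ≤ c₂ →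
        (∫ p, y (f c₁ p)) = ∫ p, y (f c₂ p)) ∧
    (∀ c : ℝ, 1 ≤ c → (∫ p, p * f c p) = 0) ∧
    Tendsto (fun c => ∫ p, p ^ 2 * f c p) atTop atTop := by
  subst hf
  have cB : Continuous B := hB.continuous
  have hB0 : ∀ x, x ∉ Set.Icc (-(1/2) : ℝ) (1/2) → B x = 0 := by
    intro x hx
    by_contra h
    exact hx (hBsupp h)
  have hBint : Integrable B := integrable_aux17 cB hB0
  -- oddness : ∫ q * B q = 0
  have hodd : (∫ q, q * B q) = 0 := by
    have h1 : (∫ q, (-q) * B (-q)) = ∫ q, q * B q :=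
      MeasureTheory.integral_neg_eq_self (fun q => q * B q) volume
    simp only [hBeven, neg_mul] at h1
    rw [integral_neg] at h1
    linarith
  -- generic integrability of φ(p) * B(p ± c)
  have hint_sub : ∀ (φ : ℝ → ℝ), Continuous φ → ∀ c : ℝ,
      Integrable (fun p => φ p * B (p - c)) := by
    intro φ hφ c
    apply integrable_aux17 (hφ.mul (cB.comp (continuous_sub_right c)))
      (a := c - 1/2) (b := c + 1/2)
    intro x hx
    have : B (x - c) = 0 := by
      apply hB0
      intro h
      simp only [Set.mem_Icc] at h hx
      exact hx ⟨by linarith [h.1], by linarith [h.2]⟩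
    simp [this]
  have hint_add : ∀ (φ : ℝ → ℝ), Continuous φ → ∀ c : ℝ,
      Integrable (fun p => φ p * B (p + c)) := by
    intro φ hφ c
    apply integrable_aux17 (hφ.mul (cB.comp (continuous_add_right c)))
      (a := -c - 1/2) (b := -c + 1/2)
    intro x hx
    have : B (x + c) = 0 := by
      apply hB0
      intro h
      simp only [Set.mem_Icc] at h hx
      exact hx ⟨by linarith [h.1], by linarith [h.2]⟩
    simp [this]
  -- moment computation: for continuous φ,
  -- ∫ φ(p) * ((B(p-c) + B(p+c))/2) = ∫ ((φ(q+c)+φ(q-c))/2) * B q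
  have hmoment : ∀ (φ : ℝ → ℝ), Continuous φ → ∀ c : ℝ,
      (∫ p, φ p * ((B (p - c) + B (p + c)) / 2)) =
        (∫ q, (φ (q + c) * B q) / 2) + ∫ q, (φ (q - c) * B q) / 2 := by
    intro φ hφ c
    have e1 : (∫ p, (φ p * B (p - c)) / 2) = ∫ q, (φ (q + c) * B q) / 2 := by
      have := MeasureTheory.integral_sub_right_eq_self (μ := volume) (fun q => (φ (q + c) * B q) / 2) c
      simp only [sub_add_cancel] at this
      exact this
    have e2 : (∫ p, (φ p * B (p + c)) / 2) = ∫ q, (φ (q - c) * B q) / 2 := by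
      have := MeasureTheory.integral_add_right_eq_self (μ := volume) (fun q => (φ (q - c) * B q) / 2) c
      simp only [add_sub_cancel_right] at this
      exact this
    calc (∫ p, φ p * ((B (p - c) + B (p + c)) / 2))
        = ∫ p, ((φ p * B (p - c)) / 2 + (φ p * B (p + c)) / 2) := by
          congr 1; funext p; ring
      _ = (∫ p, (φ p * B (p - c)) / 2) + ∫ p, (φ p * B (p + c)) / 2 := by
          exact integral_add ((hint_sub φ hφ c).div_const 2) ((hint_add φ hφ c).div_const 2)
      _ = (∫ q, (φ (q + c) * B q) / 2) + ∫ q, (φ (q - c) * B q) / 2 := by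
          rw [e1, e2]
  have hI0 : 0 < ∫ q, B q := by
    rw [integral_pos_iff_support_of_nonneg hBpos hBint]
    exact (cB.isOpen_support).measure_pos volume
      (Function.support_nonempty_iff.mpr hBne)
  refine ⟨?_, ?_, ?_⟩
  · -- first part
    intro y hy hy0 c₁ c₂ hc₁ hc₂
    have key : ∀ c : ℝ, 1 ≤ c →
        (∫ p, y ((B (p - c) + B (p + c)) / 2)) = 2 * ∫ q, y (B q / 2) := by
      intro c hc
      have hptw : ∀ p, y ((B (p - c) + B (p + c)) / 2)
          = y (B (p - c) / 2) + y (B (p + c) / 2) := by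
        intro p
        by_cases h1 : B (p - c) = 0
        · simp [h1, hy0]
        · have hmem : p - c ∈ Set.Icc (-(1/2) : ℝ) (1/2) := hBsupp h1
          have h2 : B (p + c) = 0 := by
            apply hB0
            intro h
            simp only [Set.mem_Icc] at hmem h
            linarith [hmem.1, h.2]
          simp [h2, hy0]
      have hig : Continuous (fun q => y (B q / 2)) := hy.comp (cB.div_const 2)
      have hg0 : ∀ x, x ∉ Set.Icc (-(1/2) : ℝ) (1/2) → y (B x / 2) = 0 := by
        intro x hx; rw [hB0 x hx]; simpa using hy0
      have hig1 : Integrable (fun p => y (B (p - c) / 2)) := by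
        apply integrable_aux17 (hig.comp (continuous_sub_right c))
          (a := c - 1/2) (b := c + 1/2)
        intro x hx
        apply hg0
        intro h
        simp only [Set.mem_Icc] at h hx
        exact hx ⟨by linarith [h.1], by linarith [h.2]⟩
      have hig2 : Integrable (fun p => y (B (p + c) / 2)) := by
        apply integrable_aux17 (hig.comp (continuous_add_right c))
          (a := -c - 1/2) (b := -c + 1/2)
        intro x hx
        apply hg0
        intro h
        simp only [Set.mem_Icc] at h hx
        exact hx ⟨by linarith [h.1], by linarith [h.2]⟩
      calc (∫ p, y ((B (p - c) + B (p + c)) / 2))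
          = ∫ p, (y (B (p - c) / 2) + y (B (p + c) / 2)) := by
            congr 1; funext p; exact hptw p
        _ = (∫ p, y (B (p - c) / 2)) + ∫ p, y (B (p + c) / 2) :=
            integral_add hig1 hig2
        _ = (∫ q, y (B q / 2)) + ∫ q, y (B q / 2) := by
            rw [MeasureTheory.integral_sub_right_eq_self (μ := volume) (fun q => y (B q / 2)) c,
              MeasureTheory.integral_add_right_eq_self (μ := volume) (fun q => y (B q / 2)) c]
        _ = 2 * ∫ q, y (B q / 2) := by ring
    simp only []
    rw [key c₁ hc₁, key c₂ hc₂]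
  · -- second part
    intro c _
    have hintB : ∀ (φ : ℝ → ℝ), Continuous φ → Integrable (fun q => φ q * B q) := by
      intro φ hφ
      apply integrable_aux17 (hφ.mul cB) (a := -(1/2)) (b := 1/2)
      intro x hx
      simp [hB0 x hx]
    have h := hmoment id continuous_id c
    simp only [id] at h
    have e : (∫ q, ((q + c) * B q) / 2) + ∫ q, ((q - c) * B q) / 2 = ∫ q, q * B q := by
      rw [← integral_add
        ((hintB (fun q => q + c) (continuous_add_right c)).div_const 2)
        ((hintB (fun q => q - c) (continuous_sub_right c)).div_const 2)]
      congr 1; funext q; ring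
    rw [h, e, hodd]
  · -- third part
    have hintB : ∀ (φ : ℝ → ℝ), Continuous φ → Integrable (fun q => φ q * B q) := by
      intro φ hφ
      apply integrable_aux17 (hφ.mul cB) (a := -(1/2)) (b := 1/2)
      intro x hx
      simp [hB0 x hx]
    have key : ∀ c : ℝ, (∫ p, p ^ 2 * ((B (p - c) + B (p + c)) / 2))
        = (∫ q, q ^ 2 * B q) + c ^ 2 * ∫ q, B q := by
      intro c
      have h := hmoment (fun p => p ^ 2) (continuous_pow 2) c
      rw [h]
      have e : (∫ q, ((q + c) ^ 2 * B q) / 2) + ∫ q, ((q - c) ^ 2 * B q) / 2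
          = ∫ q, (q ^ 2 * B q + c ^ 2 * B q) := by
        rw [← integral_add
          ((hintB (fun q => (q + c) ^ 2) ((continuous_add_right c).pow 2)).div_const 2)
          ((hintB (fun q => (q - c) ^ 2) ((continuous_sub_right c).pow 2)).div_const 2)]
        congr 1; funext q; ring
      rw [e, integral_add (hintB (fun q => q ^ 2) (continuous_pow 2)) (by
        simpa [mul_comm] using hBint.const_mul (c ^ 2))]
      simp [MeasureTheory.integral_const_mul]
    have : (fun c : ℝ => ∫ p, p ^ 2 * ((B (p - c) + B (p + c)) / 2))
        = fun c => (∫ q, q ^ 2 * B q) + c ^ 2 * ∫ q, B q := funext key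
    rw [this]
    apply tendsto_atTop_add_const_left
    exact Tendsto.atTop_mul_const hI0 (tendsto_pow_atTop (two_ne_zero))
end
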